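/- Let $F$ be a distribution function whose survival function is regularly varying: $1 - F(x) = x^{-\alpha}L(x)$ with $\alpha > 0$ and $L$ slowly varying. Then $F$ lies in the maximum domain of attraction of the Fréchet distribution $\Phi_\alpha$: there exist constants $c_N > 0$ such that $F^N(c_N x) \to \exp(-x^{-\alpha})$ for every $x > 0$, where one may take $c_N = \inf\{x : 1 - F(x) \le 1/N\}$. -/

import Mathlib

/-!
Write `S = 1 - F`. Regular variation gives `S (x t) / S (m t) → (x / m) ^ (-α)` as `t → ∞`.
Since `c_N → ∞` is the generalized inverse of `S` at `1 / N`, we have `S (m c_N) ≤ 1 / N` for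
`m > 1` and `S (m c_N) > 1 / N` for `m < 1`, so `N S (x c_N)` is squeezed between ratios tending
to `(x / m) ^ (-α)`; letting `m → 1` gives `N S (x c_N) → x ^ (-α)`, and then
`F (c_N x) ^ N = (1 - S (c_N x)) ^ N → exp (-x ^ (-α))`.
-/

open Filter Set Topology

def IsSlowlyVarying (L : ℝ → ℝ) : Prop :=
  ∀ l > 0, Tendsto (fun t => L (l * t) / L t) atTop (𝓝 1)

def IsRegularlyVarying (G : ℝ → ℝ) (ρ : ℝ) : Prop :=
  ∀ u > 0, Tendsto (fun t => G (u * t) / G t) atTop (𝓝 (u ^ ρ))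

theorem IsSlowlyVarying.isRegularlyVarying_rpow_mul {L : ℝ → ℝ} (hL : IsSlowlyVarying L)
    (ρ : ℝ) : IsRegularlyVarying (fun t => t ^ ρ * L t) ρ := by
  intro u hu
  have hlim : Tendsto (fun t => u ^ ρ * (L (u * t) / L t)) atTop (𝓝 (u ^ ρ)) := by
    simpa using (hL u hu).const_mul (u ^ ρ)
  refine hlim.congr' ?_
  filter_upwards [eventually_gt_atTop 0] with t ht
  rw [Real.mul_rpow hu.le ht.le, mul_assoc, mul_div_assoc,
    mul_div_mul_left _ _ (Real.rpow_pos_of_pos ht ρ).ne']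

theorem IsRegularlyVarying.congr_of_pos {G H : ℝ → ℝ} {ρ : ℝ} (hG : IsRegularlyVarying G ρ)
    (hGH : ∀ t > 0, H t = G t) : IsRegularlyVarying H ρ := by
  intro u hu
  refine (hG u hu).congr' ?_
  filter_upwards [eventually_gt_atTop 0] with t ht
  rw [hGH t ht, hGH (u * t) (mul_pos hu ht)]

theorem IsRegularlyVarying.tendsto_ratio_of_tendsto_atTop {G : ℝ → ℝ} {ρ : ℝ}
    (hG : IsRegularlyVarying G ρ) {ι : Type*} {l : Filter ι} {c : ι → ℝ} (hc : Tendsto c l atTop)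
    {u m : ℝ} (hu : 0 < u) (hm : 0 < m) :
    Tendsto (fun i => G (u * c i) / G (m * c i)) l (𝓝 ((u / m) ^ ρ)) := by
  refine ((hG (u / m) (div_pos hu hm)).comp (hc.const_mul_atTop hm)).congr fun i => ?_
  simp only [Function.comp_apply]
  rw [← mul_assoc, div_mul_cancel₀ u hm.ne']

theorem tendsto_of_squeeze_family {ι : Type*} {l : Filter ι} {a : ι → ℝ} {b : ℝ → ι → ℝ}
    {g : ℝ → ℝ} {m₀ : ℝ} (hg : ContinuousAt g m₀)
    (hb : ∀ᶠ m in 𝓝 m₀, Tendsto (b m) l (𝓝 (g m)))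
    (hlow : ∀ᶠ m in 𝓝[<] m₀, ∀ᶠ i in l, b m i ≤ a i)
    (hup : ∀ᶠ m in 𝓝[>] m₀, ∀ᶠ i in l, a i ≤ b m i) : Tendsto a l (𝓝 (g m₀)) := by
  rw [tendsto_order]
  constructor
  · intro y hy
    obtain ⟨m, ⟨hym, hbm⟩, hle⟩ :=
      ((hg.eventually (lt_mem_nhds hy)).and hb |>.filter_mono nhdsWithin_le_nhds |>.and hlow).exists
    filter_upwards [hbm.eventually (lt_mem_nhds hym), hle] with i h₁ h₂ using h₁.trans_le h₂
  · intro y hy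
    obtain ⟨m, ⟨hym, hbm⟩, hle⟩ :=
      ((hg.eventually (gt_mem_nhds hy)).and hb |>.filter_mono nhdsWithin_le_nhds |>.and hup).exists
    filter_upwards [hbm.eventually (gt_mem_nhds hym), hle] with i h₁ h₂ using h₂.trans_lt h₁

/-- For `S = 1 - F` this is the `(1 - p)`-quantile of `F`. -/
noncomputable def tailQuantile (S : ℝ → ℝ) (p : ℝ) : ℝ := sInf {x | S x ≤ p}

section TailQuantile

variable {S : ℝ → ℝ} {p : ℝ}

theorem tailQuantile_set_nonempty (hS : Tendsto S atTop (𝓝 0)) (hp : 0 < p) :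
    {x | S x ≤ p}.Nonempty :=
  ((hS.eventually (gt_mem_nhds hp)).and (eventually_ge_atTop 0)).exists.imp fun _ h => h.1.le

theorem lt_of_mem_tailQuantile_set (hS : Antitone S) {M y : ℝ} (hpM : p < S M)
    (hy : y ∈ {x | S x ≤ p}) : M < y :=
  lt_of_not_ge fun hyM => (hpM.trans_le (hS hyM)).not_ge hy

theorem le_tailQuantile (hS : Antitone S) (hS0 : Tendsto S atTop (𝓝 0)) (hp : 0 < p) {M : ℝ}
    (hpM : p < S M) : M ≤ tailQuantile S p :=
  le_csInf (tailQuantile_set_nonempty hS0 hp) fun _ hy => (lt_of_mem_tailQuantile_set hS hpM hy).le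

theorem le_of_tailQuantile_lt (hS : Antitone S) (hS0 : Tendsto S atTop (𝓝 0)) (hp : 0 < p)
    {y : ℝ} (hy : tailQuantile S p < y) : S y ≤ p := by
  obtain ⟨z, hz, hzy⟩ := exists_lt_of_csInf_lt (tailQuantile_set_nonempty hS0 hp) hy
  exact (hS hzy.le).trans hz

theorem lt_of_lt_tailQuantile (hS : Antitone S) {M y : ℝ} (hpM : p < S M)
    (hy : y < tailQuantile S p) : p < S y :=
  lt_of_not_ge fun hSy =>
    hy.not_ge (csInf_le ⟨M, fun _ hz => (lt_of_mem_tailQuantile_set hS hpM hz).le⟩ hSy)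

theorem tendsto_tailQuantile_one_div_nat (hS : Antitone S) (hSpos : ∀ t > 0, 0 < S t)
    (hS0 : Tendsto S atTop (𝓝 0)) :
    Tendsto (fun N : ℕ => tailQuantile S (1 / N)) atTop atTop := by
  refine tendsto_atTop.2 fun M => ?_
  have hpM := tendsto_one_div_atTop_nhds_zero_nat.eventually
    (gt_mem_nhds (hSpos (max M 1) (by positivity)))
  filter_upwards [hpM, eventually_gt_atTop 0] with N hN hN0
  exact (le_max_left M 1).trans (le_tailQuantile hS hS0 (by positivity) hN)

theorem IsRegularlyVarying.tendsto_nat_mul_tailQuantile {ρ : ℝ} (hRV : IsRegularlyVarying S ρ)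
    (hS : Antitone S) (hSpos : ∀ t > 0, 0 < S t) (hS0 : Tendsto S atTop (𝓝 0)) {x : ℝ}
    (hx : 0 < x) :
    Tendsto (fun N : ℕ => N * S (x * tailQuantile S (1 / N))) atTop (𝓝 (x ^ ρ)) := by
  set c := fun N : ℕ => tailQuantile S (1 / N)
  have hc := tendsto_tailQuantile_one_div_nat hS hSpos hS0
  have hcpos : ∀ᶠ N : ℕ in atTop, 0 < c N := hc.eventually_gt_atTop 0
  have hg : ContinuousAt (fun m => (x / m) ^ ρ) 1 :=
    ((continuousAt_const.div continuousAt_id one_ne_zero).rpow_const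
      (Or.inl (by simpa using hx.ne')))
  rw [show x ^ ρ = (x / 1) ^ ρ by rw [div_one]]
  refine tendsto_of_squeeze_family (g := fun m => (x / m) ^ ρ) (m₀ := 1)
    (b := fun m N => S (x * c N) / S (m * c N)) hg
    ((eventually_gt_nhds one_pos).mono fun m hm => hRV.tendsto_ratio_of_tendsto_atTop hc hx hm)
    ?_ ?_
  · filter_upwards [Ioo_mem_nhdsLT one_pos] with m ⟨hm0, hm1⟩
    filter_upwards [hcpos, eventually_gt_atTop 0, tendsto_one_div_atTop_nhds_zero_nat.eventually
      (gt_mem_nhds (hSpos 1 one_pos))] with N hcN hN0 hN1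
    have hlt : 1 / (N : ℝ) < S (m * c N) :=
      lt_of_lt_tailQuantile hS hN1 ((mul_lt_iff_lt_one_left hcN).2 hm1)
    rw [div_lt_iff₀ (by positivity)] at hlt
    rw [div_le_iff₀ (hSpos _ (mul_pos hm0 hcN))]
    nlinarith [hSpos _ (mul_pos hx hcN)]
  · filter_upwards [self_mem_nhdsWithin] with m (hm1 : 1 < m)
    filter_upwards [hcpos, eventually_gt_atTop 0] with N hcN hN0
    have hle : S (m * c N) ≤ 1 / (N : ℝ) :=
      le_of_tailQuantile_lt hS hS0 (by positivity) ((lt_mul_iff_one_lt_left hcN).2 hm1)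
    rw [le_div_iff₀ (by positivity)] at hle
    rw [le_div_iff₀ (hSpos _ (mul_pos (one_pos.trans hm1) hcN))]
    nlinarith [hSpos _ (mul_pos hx hcN)]

end TailQuantile

theorem mda_frechet_of_regularly_varying_tail_general
    (F : ℝ → ℝ) (hFmono : Monotone F)
    (hFtop : Tendsto F atTop (nhds 1))
    (α : ℝ)
    (L : ℝ → ℝ) (hLpos : ∀ t > 0, 0 < L t)
    (hSV : ∀ l > 0, Tendsto (fun t => L (l * t) / L t) atTop (nhds 1))
    (htail : ∀ x > 0, 1 - F x = x ^ (-α) * L x)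
    (c : ℕ → ℝ) (hc : ∀ N, c N = sInf {x : ℝ | 1 - F x ≤ 1 / N}) :
    ∀ x > 0,
      Tendsto (fun N : ℕ => (F (c N * x)) ^ N) atTop
        (nhds (Real.exp (-x ^ (-α)))) := by
  intro x hx
  set S : ℝ → ℝ := fun t => 1 - F t
  have hS : Antitone S := fun a b hab => sub_le_sub_left (hFmono hab) 1
  have hSpos : ∀ t > 0, 0 < S t := fun t ht => by
    simpa only [S, htail t ht] using mul_pos (Real.rpow_pos_of_pos ht _) (hLpos t ht)
  have hS0 : Tendsto S atTop (𝓝 0) := by simpa using hFtop.const_sub 1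
  have hRV : IsRegularlyVarying S (-α) :=
    (IsSlowlyVarying.isRegularlyVarying_rpow_mul hSV (-α)).congr_of_pos htail
  have hlim := hRV.tendsto_nat_mul_tailQuantile hS hSpos hS0 hx
  have hcq : ∀ N : ℕ, c N = tailQuantile S (1 / N) := hc
  refine (Real.tendsto_one_add_pow_exp_of_tendsto (g := fun N => -S (c N * x)) ?_).congr
    fun N => by simp [S]
  simpa only [hcq, mul_neg, mul_comm x] using hlim.neg

/-- Gnedenko characterization of the Fréchet maximum domain of attraction:
if the survival function `1 - F(x) = x^{-α} L(x)` is regularly varying with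
index `-α`, then with `c_N = inf {x | 1 - F(x) ≤ 1/N}` (the `(1-1/N)`-quantile)
one has `F^N(c_N x) → exp(-x^{-α})` for every `x > 0`. -/
theorem mda_frechet_of_regularly_varying_tail
    (F : ℝ → ℝ) (hFmono : Monotone F)
    (hF0 : ∀ x, 0 ≤ F x) (hF1 : ∀ x, F x ≤ 1)
    (hFtop : Tendsto F atTop (nhds 1))
    (α : ℝ) (hα : 0 < α)
    (L : ℝ → ℝ) (hLpos : ∀ t > 0, 0 < L t)
    (hSV : ∀ l > 0, Tendsto (fun t => L (l * t) / L t) atTop (nhds 1))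
    (htail : ∀ x > 0, 1 - F x = x ^ (-α) * L x)
    (c : ℕ → ℝ) (hc : ∀ N, c N = sInf {x : ℝ | 1 - F x ≤ 1 / N}) :
    ∀ x > 0,
      Tendsto (fun N : ℕ => (F (c N * x)) ^ N) atTop
        (nhds (Real.exp (-x ^ (-α)))) :=
  mda_frechet_of_regularly_varying_tail_general F hFmono hFtop α L hLpos hSV htail c hc
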